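/- arXiv:1705.02764 — 4 statements merged into one kernel-verified Lean document; each statement's English description precedes it below -/
import Mathlib

section
/- There exists a universal constant c > 0 such that for every open set D ⊆ ℝ² of finite Lebesgue measure μ(D) and every continuously differentiable function u : ℝ² → ℝ whose support is compact and contained in D, one has ∫_{ℝ²} u(x)² dx ≤ c · μ(D) · ∫_{ℝ²} ‖∇u(x)‖² dx. (Uniform Poincaré inequality with constant depending only on the area of the design region; Lemma 3 of the paper, stated for smooth compactly supported functions.) -/
/-!
Take the exponent `p` with `1/p = 1/2 + 1/n`, whose Sobolev conjugate is `2`; since `n ≥ 2`,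
`1 ≤ p ≤ 2`. The Gagliardo–Nirenberg–Sobolev inequality bounds `‖u‖₂` by `C ‖∇u‖_p`, and
Hölder's inequality on the support of `∇u`, which lies in `D`, bounds `‖∇u‖_p` by
`μ(D)^(1/p - 1/2) ‖∇u‖₂ = μ(D)^(1/n) ‖∇u‖₂`. Squaring gives the factor `μ(D)^(2/n)`,
which is `μ(D)` in the plane.
-/

open MeasureTheory Module
open scoped ENNReal NNReal

theorem eLpNorm_le_eLpNorm_mul_measure_rpow_of_support_subset {α ε : Type*} [MeasurableSpace α]
    {μ : Measure α} [TopologicalSpace ε] [ENormedAddMonoid ε] {f : α → ε} {s : Set α}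
    {p q : ℝ≥0∞} (hpq : p ≤ q) (hf : AEStronglyMeasurable f μ) (hfs : f.support ⊆ s) :
    eLpNorm f p μ ≤ eLpNorm f q μ * μ s ^ (1 / p.toReal - 1 / q.toReal) := by
  simpa only [eLpNorm_restrict_eq_of_support_subset hfs, Measure.restrict_apply_univ] using
    eLpNorm_le_eLpNorm_mul_rpow_measure_univ hpq hf.restrict (μ := μ.restrict s)

theorem lpNorm_two_sq_eq_integral_norm_sq {α E : Type*} [MeasurableSpace α] {μ : Measure α}
    [NormedAddCommGroup E] {f : α → E} (hf : AEStronglyMeasurable f μ) :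
    lpNorm f 2 μ ^ 2 = ∫ x, ‖f x‖ ^ 2 ∂μ := by
  rw [← ENNReal.coe_ofNat, lpNorm_nnreal_eq_integral_norm_rpow two_ne_zero hf]
  simp only [NNReal.coe_ofNat, Real.rpow_ofNat]
  exact_mod_cast Real.rpow_inv_natCast_pow (integral_nonneg fun x ↦ by positivity) two_ne_zero

variable {E F : Type*} [NormedAddCommGroup E] [NormedSpace ℝ E] [MeasurableSpace E] [BorelSpace E]
  [FiniteDimensional ℝ E] (μ : Measure E) [μ.IsAddHaarMeasure]
  [NormedAddCommGroup F] [NormedSpace ℝ F] [FiniteDimensional ℝ F]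

theorem exists_eLpNorm_two_le_mul_measure_rpow_mul_eLpNorm_fderiv_two (hE : 2 ≤ finrank ℝ E) :
    ∃ C : ℝ≥0, ∀ (s : Set E) (u : E → F), ContDiff ℝ 1 u → HasCompactSupport u →
      tsupport u ⊆ s →
        eLpNorm u 2 μ ≤ C * μ s ^ (finrank ℝ E : ℝ)⁻¹ * eLpNorm (fderiv ℝ u) 2 μ := by
  set n := finrank ℝ E
  have hn : (2 : ℝ) ≤ n := by exact_mod_cast hE
  set p : ℝ≥0 := (2⁻¹ + (n : ℝ≥0)⁻¹)⁻¹
  have hp_inv : (p : ℝ)⁻¹ = 2⁻¹ + (n : ℝ)⁻¹ := by simp [p]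
  have hp_pos : 0 < (p : ℝ) := by rw [← inv_pos, hp_inv]; positivity
  have hn_inv : (n : ℝ)⁻¹ ≤ 2⁻¹ := inv_anti₀ two_pos hn
  have hp_one : 1 ≤ p := by
    rw [← NNReal.coe_le_coe, NNReal.coe_one, ← inv_le_inv₀ hp_pos one_pos, hp_inv]; linarith
  have hp_two : (p : ℝ≥0∞) ≤ 2 := by
    rw [← ENNReal.coe_ofNat, ENNReal.coe_le_coe, ← NNReal.coe_le_coe, NNReal.coe_ofNat,
      ← inv_le_inv₀ two_pos hp_pos, hp_inv]
    exact le_add_of_nonneg_right (by positivity)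
  set C := SNormLESNormFDerivOfEqConst F μ p
  refine ⟨C, fun s u hu h2u hus ↦ ?_⟩
  have hGNS := eLpNorm_le_eLpNorm_fderiv_of_eq μ hu h2u hp_one (p' := 2) (by omega)
    (by rw [NNReal.coe_inv, hp_inv]; push_cast; ring)
  have hHolder := eLpNorm_le_eLpNorm_mul_measure_rpow_of_support_subset hp_two
    (hu.continuous_fderiv one_ne_zero).aestronglyMeasurable (μ := μ)
    ((support_fderiv_subset ℝ).trans hus)
  rw [ENNReal.coe_toReal, ENNReal.toReal_ofNat, one_div, one_div, hp_inv, add_sub_cancel_left]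
    at hHolder
  simp only [ENNReal.coe_ofNat] at hGNS
  calc eLpNorm u 2 μ ≤ C * eLpNorm (fderiv ℝ u) p μ := hGNS
    _ ≤ C * (eLpNorm (fderiv ℝ u) 2 μ * μ s ^ (n : ℝ)⁻¹) := by gcongr
    _ = C * μ s ^ (n : ℝ)⁻¹ * eLpNorm (fderiv ℝ u) 2 μ := by ring

theorem exists_integral_norm_sq_le_mul_measure_rpow_mul_integral_norm_fderiv_sq
    (hE : 2 ≤ finrank ℝ E) :
    ∃ c : ℝ, 0 < c ∧ ∀ (s : Set E) (u : E → F), μ s < ⊤ → ContDiff ℝ 1 u →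
      HasCompactSupport u → tsupport u ⊆ s →
        ∫ x, ‖u x‖ ^ 2 ∂μ ≤
          c * (μ s).toReal ^ (2 / finrank ℝ E : ℝ) * ∫ x, ‖fderiv ℝ u x‖ ^ 2 ∂μ := by
  obtain ⟨C, hC⟩ := exists_eLpNorm_two_le_mul_measure_rpow_mul_eLpNorm_fderiv_two μ (F := F) hE
  refine ⟨C ^ 2 + 1, by positivity, fun s u hs hu h2u hus ↦ ?_⟩
  have hu_meas : AEStronglyMeasurable u μ := hu.continuous.aestronglyMeasurable
  have hdu : Continuous (fderiv ℝ u) := hu.continuous_fderiv one_ne_zero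
  have hdu_fin : eLpNorm (fderiv ℝ u) 2 μ ≠ ⊤ :=
    (hdu.memLp_of_hasCompactSupport (h2u.fderiv ℝ)).eLpNorm_ne_top
  have hlp : lpNorm u 2 μ ≤
      C * (μ s).toReal ^ (finrank ℝ E : ℝ)⁻¹ * lpNorm (fderiv ℝ u) 2 μ := by
    simpa [toReal_eLpNorm hu_meas, toReal_eLpNorm hdu.aestronglyMeasurable,
      ← ENNReal.toReal_rpow] using ENNReal.toReal_mono (by finiteness) (hC s u hu h2u hus)
  rw [← lpNorm_two_sq_eq_integral_norm_sq hu_meas,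
    ← lpNorm_two_sq_eq_integral_norm_sq hdu.aestronglyMeasurable]
  calc lpNorm u 2 μ ^ 2
      ≤ (C * (μ s).toReal ^ (finrank ℝ E : ℝ)⁻¹ * lpNorm (fderiv ℝ u) 2 μ) ^ 2 :=
        pow_le_pow_left₀ lpNorm_nonneg hlp 2
    _ = C ^ 2 * (μ s).toReal ^ (2 / finrank ℝ E : ℝ) * lpNorm (fderiv ℝ u) 2 μ ^ 2 := by
        rw [mul_pow, mul_pow, ← Real.rpow_mul_natCast ENNReal.toReal_nonneg, div_eq_mul_inv,
          mul_comm (2 : ℝ)]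
        norm_num
    _ ≤ (C ^ 2 + 1) * (μ s).toReal ^ (2 / finrank ℝ E : ℝ) * lpNorm (fderiv ℝ u) 2 μ ^ 2 := by
        gcongr
        exact le_add_of_nonneg_right zero_le_one

/-- Uniform Poincaré inequality on open subsets of ℝ², with constant depending only
on the area of the domain, stated for C¹ compactly supported functions. -/
theorem uniform_poincare_inequality :
    ∃ c : ℝ, 0 < c ∧
      ∀ (D : Set (EuclideanSpace ℝ (Fin 2))), IsOpen D → volume D < ⊤ →
        ∀ (u : EuclideanSpace ℝ (Fin 2) → ℝ), ContDiff ℝ 1 u → HasCompactSupport u →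
          tsupport u ⊆ D →
          ∫ x, (u x) ^ 2 ≤ c * (volume D).toReal * ∫ x, ‖fderiv ℝ u x‖ ^ 2 := by
  obtain ⟨c, hc, hpoincare⟩ :=
    exists_integral_norm_sq_le_mul_measure_rpow_mul_integral_norm_fderiv_sq
      (volume : Measure (EuclideanSpace ℝ (Fin 2))) (F := ℝ) (by simp)
  refine ⟨c, hc, fun D _ hD u hu h2u huD ↦ ?_⟩
  simpa using hpoincare D u hD hu h2u huD
end

section
/- Let N ∈ ℕ, let (K_n) be a sequence of nonempty compact subsets of ℝ², each having at most N connected components, and let K be a nonempty compact subset of ℝ² such that the Hausdorff distance d_H(K_n, K) tends to 0 as n → ∞. Then K has at most N connected components. (This is the key stability property of the constraint ♯Ω^c ≤ N defining Šverák's admissible class, under complementary Hausdorff convergence.) -/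
/-!
If `L` had more than `N` components, a clopen partition of `L` into `N + 1` nonempty pieces would
exist (in a compact Hausdorff space components are intersections of clopen sets). The pieces are
disjoint compact sets, so they have pairwise disjoint `δ`-thickenings; a set `δ`-close to `L` in
the Hausdorff distance lies in their union and meets each of them, hence also splits into
`N + 1` nonempty clopen pieces and has more than `N` components.
-/

open Set Metric Function Cardinal

universe u

theorem DiscreteQuotient.exists_natCast_lt_card {X : Type*} [TopologicalSpace X] [T2Space X]
    [CompactSpace X] [TotallyDisconnectedSpace X] {N : ℕ} (h : (N : Cardinal) < #X) :
    ∃ Q : DiscreteQuotient X, (N : Cardinal) < #Q := by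
  obtain ⟨e⟩ : Nonempty (Fin (N + 1) ↪ X) := by
    rw [← lift_mk_le', mk_fin, lift_natCast, lift_uzero, Nat.cast_succ]
    exact add_one_le_of_lt h
  have hsep : ∀ i j, i ≠ j → ∃ Q : DiscreteQuotient X, Q.proj (e i) ≠ Q.proj (e j) := by
    intro i j hij
    by_contra! h
    exact hij (e.injective (eq_of_forall_proj_eq h))
  choose! Q hQ using hsep
  set Q₀ := Finset.univ.inf fun p : Fin (N + 1) × Fin (N + 1) => Q p.1 p.2
  have hinj : Injective (Q₀.proj ∘ e) := by
    intro i j hij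
    by_contra hne
    refine hQ i j hne ?_
    have hle : Q₀ ≤ Q i j := Finset.inf_le (f := fun p => Q p.1 p.2) (Finset.mem_univ (i, j))
    simpa only [comp_apply, ofLE_proj] using congrArg (ofLE hle) hij
  have hcard : ((N + 1 : ℕ) : Cardinal) ≤ #Q₀ := by
    simpa only [mk_fin, lift_natCast, lift_uzero] using lift_mk_le_lift_mk_of_injective hinj
  exact ⟨Q₀, (Nat.cast_lt.2 N.lt_succ_self).trans_le hcard⟩

theorem Cardinal.mk_le_mk_connectedComponents_of_surjective {X Y : Type u} [TopologicalSpace X]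
    [TopologicalSpace Y] [TotallyDisconnectedSpace Y] {f : X → Y} (hf : Continuous f)
    (hs : Surjective f) : #Y ≤ #(ConnectedComponents X) := by
  rw [← hf.connectedComponentsLift_comp_coe] at hs
  exact mk_le_of_surjective hs.of_comp

theorem exists_pos_pairwise_disjoint_thickening {X ι : Type*} [EMetricSpace X] [Finite ι]
    {V : ι → Set X} (hV : ∀ i, IsCompact (V i)) (hd : Pairwise (Disjoint on V)) :
    ∃ δ > 0, Pairwise (Disjoint on fun i => thickening δ (V i)) := by
  have : ∀ᶠ δ in nhds (0 : ℝ), ∀ i j, i ≠ j →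
      Disjoint (thickening δ (V i)) (thickening δ (V j)) := by
    refine Filter.eventually_all.2 fun i => Filter.eventually_all.2 fun j => ?_
    by_cases hij : i = j
    · exact .of_forall fun _ h => (h hij).elim
    obtain ⟨δ, hδ, hdisj⟩ := (hd hij).exists_thickenings (hV i) (hV j).isClosed
    filter_upwards [Iio_mem_nhds hδ] with ε hε _
    exact hdisj.mono (thickening_mono hε.le _) (thickening_mono hε.le _)
  exact this.exists_gt

theorem exists_continuous_surjective_of_hausdorffEDist_lt {X Y : Type*} [EMetricSpace X]
    [TopologicalSpace Y] [DiscreteTopology Y] {L : Set X} (hL : IsCompact L) {f : L → Y}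
    (hf : Continuous f) (hs : Surjective f) :
    ∃ δ > 0, ∀ K : Set X, hausdorffEDist K L < ENNReal.ofReal δ →
      ∃ g : K → Y, Continuous g ∧ Surjective g := by
  have := isCompact_iff_compactSpace.mp hL
  have : Finite Y := by
    have := (isCompact_range hf).finite_of_discrete
    rwa [hs.range_eq, Set.finite_univ_iff] at this
  set V : Y → Set X := fun y => Subtype.val '' (f ⁻¹' {y})
  have hV : ∀ y, IsCompact (V y) := fun y =>
    (isClosed_singleton.preimage hf).isCompact.image continuous_subtype_val
  have hd : Pairwise (Disjoint on V) := fun y y' h =>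
    (disjoint_image_iff Subtype.val_injective).2 ((disjoint_singleton.2 h).preimage f)
  have hmem : ∀ x : L, ∀ z : X, ∀ δ : ℝ, edist z x < ENNReal.ofReal δ →
      z ∈ thickening δ (V (f x)) := fun x z δ h =>
    (mem_thickening_iff_exists_edist_lt _ _).2 ⟨x, ⟨x, rfl, rfl⟩, h⟩
  obtain ⟨δ, hδ, hW⟩ := exists_pos_pairwise_disjoint_thickening hV hd
  refine ⟨δ, hδ, fun K hK => ?_⟩
  have hcover : ∀ z : K, ∃ y, (z : X) ∈ thickening δ (V y) := fun z => by
    obtain ⟨x, hx, hzx⟩ := exists_edist_lt_of_hausdorffEDist_lt z.2 hK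
    exact ⟨_, hmem ⟨x, hx⟩ z δ hzx⟩
  choose g hg using hcover
  have hfiber : ∀ y, g ⁻¹' {y} = Subtype.val ⁻¹' thickening δ (V y) := by
    intro y
    ext z
    refine ⟨fun hz => hz ▸ hg z, fun hz => ?_⟩
    by_contra hne
    exact disjoint_left.1 (hW hne) (hg z) hz
  refine ⟨g, continuous_discrete_rng.2 fun y => ?_, fun y => ?_⟩
  · rw [hfiber]
    exact isOpen_thickening.preimage continuous_subtype_val
  · obtain ⟨⟨x, hx⟩, rfl⟩ := hs y
    obtain ⟨z, hz, hxz⟩ :=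
      exists_edist_lt_of_hausdorffEDist_lt hx (by rwa [hausdorffEDist_comm] at hK)
    refine ⟨⟨z, hz⟩, ?_⟩
    change (⟨z, hz⟩ : K) ∈ g ⁻¹' {f ⟨x, hx⟩}
    rw [hfiber]
    exact hmem _ z δ (edist_comm x z ▸ hxz)

/-- A Hausdorff limit of nonempty compact subsets of ℝ², each having at most N
connected components, has at most N connected components. -/
theorem hausdorff_limit_components_le
    (N : ℕ) (K : ℕ → Set (EuclideanSpace ℝ (Fin 2))) (L : Set (EuclideanSpace ℝ (Fin 2)))
    (hKc : ∀ n, IsCompact (K n)) (hKne : ∀ n, (K n).Nonempty)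
    (hKcomp : ∀ n, Cardinal.mk (ConnectedComponents (K n)) ≤ N)
    (hLc : IsCompact L) (hLne : L.Nonempty)
    (hconv : Filter.Tendsto (fun n => Metric.hausdorffDist (K n) L) Filter.atTop (nhds 0)) :
    Cardinal.mk (ConnectedComponents L) ≤ N := by
  by_contra! hN
  have := isCompact_iff_compactSpace.mp hLc
  obtain ⟨Q, hQ⟩ := DiscreteQuotient.exists_natCast_lt_card hN
  obtain ⟨δ, hδ, hclose⟩ := exists_continuous_surjective_of_hausdorffEDist_lt hLc
    (Q.proj_continuous.comp ConnectedComponents.continuous_coe)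
    (Q.proj_surjective.comp ConnectedComponents.surjective_coe)
  obtain ⟨n, hn⟩ := (hconv.eventually (gt_mem_nhds hδ)).exists
  have hfin := hausdorffEDist_ne_top_of_nonempty_of_bounded (hKne n) hLne
    (hKc n).isBounded hLc.isBounded
  obtain ⟨g, hg, hgs⟩ := hclose (K n) ((ENNReal.lt_ofReal_iff_toReal_lt hfin).2 hn)
  exact (hQ.trans_le ((mk_le_mk_connectedComponents_of_surjective hg hgs).trans (hKcomp n))).false
end

section
/- Let D ⊆ ℝ² be a nonempty bounded open set, ω ⊆ D a nonempty open set, and N ∈ ℕ. Let (Ω_n) be a sequence in the admissible class 𝒪_ω^N. Then there exist Ω ∈ 𝒪_ω^N and a subsequence (Ω_{n_k}) such that d_H(Ω_{n_k}^c, Ω^c) → 0 as k → ∞, i.e. Ω_{n_k} converges to Ω in the complementary Hausdorff topology. (Compactness of the class 𝒪_ω^N in the complementary Hausdorff topology.) -/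
/-! The complements `closure D \ Ωₙ` are closed subsets of the compact set `closure D`, and the
closed subsets of a compact space form a compact space for the Hausdorff metric, so a
subsequence converges to a closed `K ⊆ closure D`. Hausdorff limits preserve inclusion in a
closed set and containment of a fixed set, hence `K` misses `ω` and contains `closure D \ D`, and
`Ω := D \ K` is admissible with complement exactly `K`, provided `K` has at most `N` components.

That bound is lower semicontinuity of the number of components. If a compact `K` has more
than `N` of them, discrete quotients of its (profinite) space of components give a continuous
surjection `K → Fin (N + 1)`. A Lebesgue number `δ` of its fibres lets any set `B` with
`d_H(B, K) < δ / 3` inherit such a surjection, by colouring each point of `B` like a nearby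
point of `K`, so `B` also has more than `N` components. -/

open Set Filter Topology Metric Function
open scoped Cardinal

/-- Šverák's admissible class: open sets `Ω` with `ω ⊆ Ω ⊆ D` whose complement
`closure D \ Ω` has at most `N` connected components. -/
def SverakAdmissible (D ω : Set (EuclideanSpace ℝ (Fin 2))) (N : ℕ)
    (Ω : Set (EuclideanSpace ℝ (Fin 2))) : Prop :=
  IsOpen Ω ∧ ω ⊆ Ω ∧ Ω ⊆ D ∧
    Cardinal.mk (ConnectedComponents ↥(closure D \ Ω)) ≤ N

theorem DiscreteQuotient.exists_injOn_proj {Y : Type*} [TopologicalSpace Y] [CompactSpace Y]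
    [T2Space Y] [TotallyDisconnectedSpace Y] {s : Set Y} (hs : s.Finite) :
    ∃ Q : DiscreteQuotient Y, InjOn Q.proj s := by
  have hsep : ∀ x y : Y, x ≠ y → ∃ Q : DiscreteQuotient Y, Q.proj x ≠ Q.proj y := by
    intro x y hxy
    by_contra! h
    exact hxy (DiscreteQuotient.eq_of_forall_proj_eq h)
  choose! sep hsep using hsep
  refine ⟨(hs.toFinset ×ˢ hs.toFinset).inf fun p => sep p.1 p.2, fun x hx y hy hxy => ?_⟩
  by_contra hne
  have hle : (hs.toFinset ×ˢ hs.toFinset).inf (fun p => sep p.1 p.2) ≤ sep x y :=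
    Finset.inf_le (f := fun p : Y × Y => sep p.1 p.2) (b := (x, y))
      (Finset.mem_product.2 ⟨hs.mem_toFinset.2 hx, hs.mem_toFinset.2 hy⟩)
  apply hsep x y hne
  rw [← DiscreteQuotient.ofLE_proj hle, hxy, DiscreteQuotient.ofLE_proj]

theorem Cardinal.natCast_lt_mk_iff_nonempty_fin_embedding {Y : Type*} {n : ℕ} :
    (n : Cardinal) < #Y ↔ Nonempty (Fin (n + 1) ↪ Y) := by
  rw [← Order.succ_le_iff, Cardinal.succ_natCast, ← Nat.cast_add_one, ← Cardinal.lift_mk_fin,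
    ← Cardinal.lift_uzero #Y, Cardinal.lift_mk_le']

theorem natCast_lt_card_connectedComponents_of_continuous_surjective {X : Type*}
    [TopologicalSpace X] {n : ℕ} {f : X → Fin (n + 1)} (hf : Continuous f)
    (hsurj : Surjective f) : (n : Cardinal) < #(ConnectedComponents X) :=
  Cardinal.natCast_lt_mk_iff_nonempty_fin_embedding.2
    ⟨.ofSurjective hf.connectedComponentsLift (.of_comp (g := ConnectedComponents.mk) hsurj)⟩

theorem exists_continuous_surjective_of_natCast_lt_card_connectedComponents {X : Type*}
    [TopologicalSpace X] [CompactSpace X] [T2Space X] {n : ℕ}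
    (h : (n : Cardinal) < #(ConnectedComponents X)) :
    ∃ f : X → Fin (n + 1), Continuous f ∧ Surjective f := by
  obtain ⟨e⟩ := Cardinal.natCast_lt_mk_iff_nonempty_fin_embedding.1 h
  obtain ⟨Q, hQ⟩ := DiscreteQuotient.exists_injOn_proj (finite_range e)
  have hinj : Injective (Q.proj ∘ e) := fun i j hij =>
    e.injective (hQ (mem_range_self i) (mem_range_self j) hij)
  exact ⟨invFun (Q.proj ∘ e) ∘ Q.proj ∘ (↑),
    continuous_of_discreteTopology.comp
      (Q.proj_continuous.comp ConnectedComponents.continuous_coe),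
    (invFun_surjective hinj).comp (Q.proj_surjective.comp ConnectedComponents.surjective_coe)⟩

theorem IsCompact.exists_continuous_of_hausdorffEDist_lt {α ι : Type*} [PseudoEMetricSpace α]
    [TopologicalSpace ι] [DiscreteTopology ι] {A : Set α} (hA : IsCompact A) {f : A → ι}
    (hf : Continuous f) :
    ∃ ε > 0, ∀ B : Set α, hausdorffEDist B A < ε →
      ∃ g : B → ι, Continuous g ∧ range f ⊆ range g := by
  have := isCompact_iff_compactSpace.mp hA
  obtain ⟨δ, hδ, hleb⟩ := lebesgue_number_lemma_of_emetric (c := fun i => f ⁻¹' {i})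
    isCompact_univ (fun i => hf.isOpen_preimage _ (isOpen_discrete _))
    (fun a _ => mem_iUnion.2 ⟨f a, rfl⟩)
  have hconst : ∀ a a' : A, edist a a' < δ → f a' = f a := by
    intro a a' haa'
    obtain ⟨i, hi⟩ := hleb a (mem_univ a)
    rw [hi (mem_eball_self hδ), hi (mem_eball.2 (by rwa [edist_comm]))]
  have hδ3 : 0 < δ / 3 := ENNReal.div_pos hδ.ne' ENNReal.ofNat_ne_top
  refine ⟨δ / 3, hδ3, fun B hB => ?_⟩
  choose near hnear using fun b : B => exists_edist_lt_of_hausdorffEDist_lt b.2 hB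
  set g : B → ι := fun b => f ⟨near b, (hnear b).1⟩
  have hg : ∀ (b : B) (a : A), edist (b : α) a < δ / 3 + δ / 3 → g b = f a := by
    intro b a hba
    refine hconst a _ ?_
    calc edist (a : α) (near b) ≤ edist (a : α) b + edist (b : α) (near b) := edist_triangle _ _ _
      _ < δ / 3 + δ / 3 + δ / 3 := by
          rw [edist_comm]; exact ENNReal.add_lt_add hba (hnear b).2
      _ = δ := ENNReal.add_thirds δ
  refine ⟨g, ((IsLocallyConstant.iff_eventually_eq g).2 fun b => ?_).continuous, ?_⟩
  · filter_upwards [eball_mem_nhds b hδ3] with b' hb'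
    refine hg b' ⟨near b, (hnear b).1⟩ ?_
    calc edist (b' : α) (near b) ≤ edist (b' : α) b + edist (b : α) (near b) := edist_triangle _ _ _
      _ < δ / 3 + δ / 3 := ENNReal.add_lt_add hb' (hnear b).2
  · rintro _ ⟨a, rfl⟩
    rw [hausdorffEDist_comm] at hB
    obtain ⟨b, hbB, hab⟩ := exists_edist_lt_of_hausdorffEDist_lt a.2 hB
    refine ⟨⟨b, hbB⟩, hg _ a ?_⟩
    rw [edist_comm]
    exact hab.trans_le le_self_add

theorem IsClosed.subset_of_tendsto_hausdorffEDist {α ι : Type*} [PseudoEMetricSpace α]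
    {l : Filter ι} [l.NeBot] {F : ι → Set α} {K G : Set α}
    (hG : IsClosed G) (hlim : Tendsto (fun i => hausdorffEDist (F i) K) l (𝓝 0))
    (hFG : ∀ᶠ i in l, F i ⊆ G) : K ⊆ G := by
  intro x hx
  rw [← hG.closure_eq, mem_closure_iff_infEDist_zero]
  refine le_antisymm (ge_of_tendsto hlim ?_) bot_le
  filter_upwards [hFG] with i hi
  calc infEDist x G ≤ infEDist x (F i) := infEDist_anti hi
    _ ≤ hausdorffEDist K (F i) := infEDist_le_hausdorffEDist_of_mem hx
    _ = hausdorffEDist (F i) K := hausdorffEDist_comm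

theorem IsClosed.superset_of_tendsto_hausdorffEDist {α ι : Type*} [PseudoEMetricSpace α]
    {l : Filter ι} [l.NeBot] {F : ι → Set α} {K S : Set α}
    (hK : IsClosed K) (hlim : Tendsto (fun i => hausdorffEDist (F i) K) l (𝓝 0))
    (hSF : ∀ᶠ i in l, S ⊆ F i) : S ⊆ K := by
  intro x hx
  rw [← hK.closure_eq, mem_closure_iff_infEDist_zero]
  refine le_antisymm (ge_of_tendsto hlim ?_) bot_le
  filter_upwards [hSF] with i hi
  exact infEDist_le_hausdorffEDist_of_mem (hi hx)

theorem IsCompact.exists_subseq_tendsto_hausdorffEDist {α : Type*} [EMetricSpace α]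
    {C : Set α} (hC : IsCompact C) {F : ℕ → Set α} (hF : ∀ n, IsClosed (F n))
    (hFC : ∀ n, F n ⊆ C) :
    ∃ K ⊆ C, IsCompact K ∧ ∃ φ : ℕ → ℕ, StrictMono φ ∧
      Tendsto (fun k => hausdorffEDist (F (φ k)) K) atTop (𝓝 0) := by
  have := isCompact_iff_compactSpace.mp hC
  let T : ℕ → TopologicalSpace.Closeds C := fun n =>
    ⟨(↑) ⁻¹' F n, (hF n).preimage continuous_subtype_val⟩
  obtain ⟨K, -, φ, hφ, hlim⟩ := isCompact_univ.tendsto_subseq (x := T) fun _ => mem_univ _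
  have himage : ∀ n, ((↑) : C → α) '' T n = F n := fun n => by
    simp only [T, TopologicalSpace.Closeds.coe_mk, Subtype.image_preimage_coe,
      inter_eq_right.2 (hFC n)]
  refine ⟨(↑) '' (K : Set C), by simp, K.isClosed.isCompact.image continuous_subtype_val, φ, hφ,
    ?_⟩
  simpa only [← himage, hausdorffEDist_image isometry_subtype_coe, comp_apply,
    TopologicalSpace.Closeds.edist_eq] using tendsto_iff_edist_tendsto_0.1 hlim

theorem IsCompact.card_connectedComponents_le_of_tendsto_hausdorffEDist {α ι : Type*}
    [EMetricSpace α] {l : Filter ι} [l.NeBot] {A : Set α} {B : ι → Set α} {N : ℕ}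
    (hA : IsCompact A) (hlim : Tendsto (fun i => hausdorffEDist (B i) A) l (𝓝 0))
    (hB : ∀ᶠ i in l, #(ConnectedComponents (B i)) ≤ N) :
    #(ConnectedComponents A) ≤ N := by
  have := isCompact_iff_compactSpace.mp hA
  by_contra! hA_lt
  obtain ⟨f, hf, hf_surj⟩ :=
    exists_continuous_surjective_of_natCast_lt_card_connectedComponents hA_lt
  obtain ⟨ε, hε, hε_transfer⟩ := hA.exists_continuous_of_hausdorffEDist_lt hf
  obtain ⟨i, hi_close, hi_le⟩ := ((tendsto_order.1 hlim).2 ε hε |>.and hB).exists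
  obtain ⟨g, hg, hfg⟩ := hε_transfer (B i) hi_close
  have hB_lt : (N : Cardinal) < #(ConnectedComponents (B i)) :=
    natCast_lt_card_connectedComponents_of_continuous_surjective hg
      fun j => hfg (hf_surj.range_eq ▸ mem_univ j)
  exact hi_le.not_gt hB_lt

theorem sverak_class_compact_general
    (D ω : Set (EuclideanSpace ℝ (Fin 2)))
    (hD : IsOpen D) (hDb : Bornology.IsBounded D)
    (hω : IsOpen ω) (hωD : ω ⊆ D)
    (N : ℕ) (Ωseq : ℕ → Set (EuclideanSpace ℝ (Fin 2)))
    (hadm : ∀ n, SverakAdmissible D ω N (Ωseq n)) :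
    ∃ (Ω : Set (EuclideanSpace ℝ (Fin 2))) (φ : ℕ → ℕ), SverakAdmissible D ω N Ω ∧
      StrictMono φ ∧
      Filter.Tendsto
        (fun k => Metric.hausdorffDist (closure D \ Ωseq (φ k)) (closure D \ Ω))
        Filter.atTop (nhds 0) := by
  obtain ⟨K, hKD, hK, φ, hφ, hlim⟩ :=
    hDb.isCompact_closure.exists_subseq_tendsto_hausdorffEDist
      (fun n => isClosed_closure.sdiff (hadm n).1) (fun n => sdiff_subset)
  have hKω : K ⊆ ωᶜ := hω.isClosed_compl.subset_of_tendsto_hausdorffEDist hlim <|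
    .of_forall fun k _ hx hxω => hx.2 ((hadm (φ k)).2.1 hxω)
  have hfrontier : closure D \ D ⊆ K := hK.isClosed.superset_of_tendsto_hausdorffEDist hlim <|
    .of_forall fun k => sdiff_subset_sdiff_right (hadm (φ k)).2.2.1
  have hcompl : closure D \ (D \ K) = K := by
    rw [sdiff_sdiff_right, inter_eq_right.2 hKD, union_eq_right.2 hfrontier]
  refine ⟨D \ K, φ, ⟨hD.sdiff hK.isClosed, fun x hx => ⟨hωD hx, fun hxK => hKω hxK hx⟩,
    sdiff_subset, ?_⟩, hφ, ?_⟩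
  · rw [hcompl]
    exact hK.card_connectedComponents_le_of_tendsto_hausdorffEDist hlim
      (.of_forall fun k => (hadm (φ k)).2.2.2)
  · rw [hcompl]
    simpa only [hausdorffDist, comp_def, ENNReal.toReal_zero] using
      (ENNReal.tendsto_toReal ENNReal.zero_ne_top).comp hlim

/-- Compactness of the class `𝒪_ω^N` in the complementary Hausdorff topology. -/
theorem sverak_class_compact
    (D ω : Set (EuclideanSpace ℝ (Fin 2)))
    (hD : IsOpen D) (hDb : Bornology.IsBounded D) (hDne : D.Nonempty)
    (hω : IsOpen ω) (hωne : ω.Nonempty) (hωD : ω ⊆ D)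
    (N : ℕ) (Ωseq : ℕ → Set (EuclideanSpace ℝ (Fin 2)))
    (hadm : ∀ n, SverakAdmissible D ω N (Ωseq n)) :
    ∃ (Ω : Set (EuclideanSpace ℝ (Fin 2))) (φ : ℕ → ℕ), SverakAdmissible D ω N Ω ∧
      StrictMono φ ∧
      Filter.Tendsto
        (fun k => Metric.hausdorffDist (closure D \ Ωseq (φ k)) (closure D \ Ω))
        Filter.atTop (nhds 0) :=
  sverak_class_compact_general D ω hD hDb hω hωD N Ωseq hadm
end

section
/- Let H be a real Hilbert space, λ > 0, let A : H → H be a λ-dissipative bounded linear operator, let f, y₀ ∈ H, let y(t) = exp(tA) y₀ + ∫₀^t exp(sA) f ds be the mild solution of y' = A y + f, y(0) = y₀, and let p ∈ H satisfy A p = -f. Then for every T > 0, ∫₀^T ‖y(t) - p‖² dt ≤ ‖y₀ - p‖² / (2λ). (Abstract form of the time-integrated estimate (13) in the paper, with a bound independent of the time horizon T.) -/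
/-!
Subtracting the equilibrium `p` turns the mild solution into the free orbit
`u t = exp (t • A) (y₀ - p)`, because `∫₀ᵗ exp (s • A) f = p - exp (t • A) p` when `A p = -f`.
Along `u' = A u` the energy `‖u t‖²` has derivative `2 ⟪A u, u⟫ ≤ -2λ ‖u‖²`, so integrating over
`[0, T]` gives `2λ ∫₀ᵀ ‖u‖² + ‖u T‖² ≤ ‖u 0‖²`.
-/

open RealInnerProductSpace

section ExpApply

variable {E : Type*} [NormedAddCommGroup E] [NormedSpace ℝ E] [CompleteSpace E]

theorem hasDerivAt_exp_smul_apply (A : E →L[ℝ] E) (x : E) (t : ℝ) :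
    HasDerivAt (fun s : ℝ => NormedSpace.exp (s • A) x) (A (NormedSpace.exp (t • A) x)) t := by
  simpa using (hasDerivAt_exp_smul_const' (𝕂 := ℝ) A t).clm_apply (hasDerivAt_const t x)

theorem hasDerivAt_exp_smul_apply' (A : E →L[ℝ] E) (x : E) (t : ℝ) :
    HasDerivAt (fun s : ℝ => NormedSpace.exp (s • A) x) (NormedSpace.exp (t • A) (A x)) t := by
  simpa using (hasDerivAt_exp_smul_const (𝕂 := ℝ) A t).clm_apply (hasDerivAt_const t x)

theorem continuous_exp_smul_apply (A : E →L[ℝ] E) (x : E) :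
    Continuous fun s : ℝ => NormedSpace.exp (s • A) x :=
  continuous_iff_continuousAt.2 fun t => (hasDerivAt_exp_smul_apply A x t).continuousAt

theorem integral_exp_smul_apply_of_apply_eq_neg {A : E →L[ℝ] E} {f p : E} (hp : A p = -f)
    (t : ℝ) :
    ∫ s in (0 : ℝ)..t, NormedSpace.exp (s • A) f = p - NormedSpace.exp (t • A) p := by
  have hderiv : ∀ s ∈ Set.uIcc (0 : ℝ) t,
      HasDerivAt (fun r : ℝ => -NormedSpace.exp (r • A) p) (NormedSpace.exp (s • A) f) s := by
    intro s _
    have h := (hasDerivAt_exp_smul_apply' A p s).neg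
    rwa [hp, map_neg, neg_neg] at h
  rw [intervalIntegral.integral_eq_sub_of_hasDerivAt hderiv
    ((continuous_exp_smul_apply A f).intervalIntegrable _ _)]
  simp only [zero_smul, NormedSpace.exp_zero, one_apply_eq_self]
  abel

end ExpApply

theorem two_mul_integral_norm_sq_add_norm_sq_le {H : Type*} [NormedAddCommGroup H]
    [InnerProductSpace ℝ H] {lam : ℝ} {A : H →L[ℝ] H}
    (hA : ∀ x : H, ⟪A x, x⟫ ≤ -lam * ‖x‖ ^ 2) {u : ℝ → H}
    (hu : ∀ t, HasDerivAt u (A (u t)) t) {T : ℝ} (hT : 0 ≤ T) :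
    2 * lam * (∫ t in (0 : ℝ)..T, ‖u t‖ ^ 2) + ‖u T‖ ^ 2 ≤ ‖u 0‖ ^ 2 := by
  have hu_cont : Continuous u := continuous_iff_continuousAt.2 fun t => (hu t).continuousAt
  have henergy : ∀ t ∈ Set.uIcc (0 : ℝ) T,
      HasDerivAt (fun s => -‖u s‖ ^ 2) (-(2 * ⟪A (u t), u t⟫)) t := by
    intro t _
    have h := (hu t).norm_sq.neg
    rwa [real_inner_comm] at h
  have hrate_cont : Continuous fun t => -(2 * ⟪A (u t), u t⟫) := by fun_prop
  have hpointwise : ∀ t ∈ Set.Icc (0 : ℝ) T, 2 * lam * ‖u t‖ ^ 2 ≤ -(2 * ⟪A (u t), u t⟫) :=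
    fun t _ => by linarith [hA (u t)]
  have hmono : ∫ t in (0 : ℝ)..T, 2 * lam * ‖u t‖ ^ 2
      ≤ ∫ t in (0 : ℝ)..T, -(2 * ⟪A (u t), u t⟫) := intervalIntegral.integral_mono_on hT
    ((by fun_prop : Continuous fun t => 2 * lam * ‖u t‖ ^ 2).intervalIntegrable _ _)
    (hrate_cont.intervalIntegrable _ _) hpointwise
  rw [intervalIntegral.integral_const_mul,
    intervalIntegral.integral_eq_sub_of_hasDerivAt henergy (hrate_cont.intervalIntegrable _ _)]
    at hmono
  linarith

/-- Time-integrated estimate for the distance of the mild solution to the stationary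
state, with a bound independent of the time horizon `T`. -/
theorem mild_solution_time_integrated_bound
    {H : Type*} [NormedAddCommGroup H] [InnerProductSpace ℝ H] [CompleteSpace H]
    (lam : ℝ) (hlam : 0 < lam) (A : H →L[ℝ] H)
    (hA : ∀ x : H, ⟪A x, x⟫ ≤ -lam * ‖x‖ ^ 2) (f y₀ : H)
    (y : ℝ → H)
    (hy : ∀ t : ℝ, y t = (NormedSpace.exp (t • A)) y₀
      + ∫ s in (0:ℝ)..t, (NormedSpace.exp (s • A)) f)
    (p : H) (hp : A p = -f)
    (T : ℝ) (hT : 0 < T) :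
    ∫ t in (0:ℝ)..T, ‖y t - p‖ ^ 2 ≤ ‖y₀ - p‖ ^ 2 / (2 * lam) := by
  set u : ℝ → H := fun t => NormedSpace.exp (t • A) (y₀ - p)
  have hyu : ∀ t, y t - p = u t := fun t => by
    simp only [u, hy t, integral_exp_smul_apply_of_apply_eq_neg hp t, map_sub]
    abel
  have hu0 : u 0 = y₀ - p := by simp [u]
  have henergy := two_mul_integral_norm_sq_add_norm_sq_le hA
    (hasDerivAt_exp_smul_apply A (y₀ - p)) hT.le
  simp_rw [hyu]
  rw [← hu0, le_div_iff₀ (by positivity)]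
  linarith [sq_nonneg ‖u T‖]
end
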